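/- Let M be a symmetric negative definite integer n×n matrix (n ≥ 2) with non-negative off-diagonal entries, a ∈ ℤⁿ with a_i ≥ 0, and b ∈ ℤⁿ with b_i ≥ 0 satisfying Ma = (-1 + b_0, b_1, ..., b_{n-1})ᵀ. If b_0 = 1, then b_i = 0 for all i ≠ 0. -/

import Mathlib

open Matrix

/- With `b 0 = 1` the right-hand side `M a` is entrywise non-negative, so `a ⬝ᵥ M a ≥ 0`;
negative definiteness then forces `a = 0`, whence `b i = (M a) i = 0` for `i ≠ 0`. -/

theorem Matrix.eq_zero_of_nonneg_of_mulVec_nonneg {ι R : Type*} [Fintype ι] [Semiring R]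
    [PartialOrder R] [IsOrderedRing R] {M : Matrix ι ι R}
    (hneg : ∀ x : ι → R, x ≠ 0 → x ⬝ᵥ M.mulVec x < 0) {a : ι → R} (ha : 0 ≤ a)
    (hMa : 0 ≤ M.mulVec a) : a = 0 := by
  by_contra h
  exact (hneg a h).not_ge (dotProduct_nonneg_of_nonneg ha hMa)

/-- The other half of the dichotomy after Lemma 3.2: in the system
`M a = (-1 + b 0, b 1, ..., b (n-1))` with `a, b` entrywise non-negative integers, if
`b 0 = 1` then `b i = 0` for all `i ≠ 0`. -/
theorem b_i_eq_zero_of_b_zero_eq_one (n : ℕ) (hn : 2 ≤ n) (M : Matrix (Fin n) (Fin n) ℤ)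
    (hneg : ∀ x : Fin n → ℤ, x ≠ 0 → x ⬝ᵥ M.mulVec x < 0)
    (a b : Fin n → ℤ) (ha : ∀ i, 0 ≤ a i) (hb : ∀ i, 0 ≤ b i)
    (hMa : M.mulVec a = fun i => if i = ⟨0, by omega⟩ then -1 + b i else b i)
    (hb0 : b ⟨0, by omega⟩ = 1) :
    ∀ i, i ≠ ⟨0, by omega⟩ → b i = 0 := by
  have hMa_nonneg : 0 ≤ M.mulVec a := by
    intro i
    rw [hMa, Pi.zero_apply]
    dsimp only
    split_ifs with hi
    · simp [hi, hb0]
    · exact hb i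
  have ha0 : a = 0 := eq_zero_of_nonneg_of_mulVec_nonneg hneg ha hMa_nonneg
  intro i hi
  simpa [ha0, hi, eq_comm] using congrFun hMa i
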